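/- arXiv:2006.12043 — 5 statements merged into one kernel-verified Lean document; each statement's English description precedes it below -/
import Mathlib

section
/- Let B be a graded-commutative K-algebra with unit e ∈ B^0 and dim_K B^0 = 1, let A be a Poincaré n-self-dual graded-commutative K-algebra, let ρ: B → A be a surjective homomorphism of graded K-algebras (so A is a factor algebra of B by a homogeneous two-sided ideal), and let φ: A^n → K be a K-linear isomorphism. Define ℓ: B → K by ℓ(b) = φ(ρ(b)) for b ∈ B^n and ℓ = 0 on B^m for every m ≠ n. Then ℓ is an n-homogeneous linear function on B, the kernel of ρ equals I(L_ℓ), and consequently A is isomorphic as a graded K-algebra to B/I(L_ℓ). -/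
theorem keylem {K B A : Type*} [Field K] [Ring B] [Algebra K B] [Ring A] [Algebra K A]
    (𝒜 : ℕ → Submodule K B) [GradedAlgebra 𝒜]
    (ℬ : ℕ → Submodule K A) [GradedAlgebra ℬ]
    (ρ : B →ₐ[K] A)
    (hρgr : ∀ i : ℕ, ∀ x ∈ 𝒜 i, ρ x ∈ ℬ i) (x : B) (i : ℕ) :
    (DirectSum.decompose ℬ (ρ x) i : A) = ρ (DirectSum.decompose 𝒜 x i) := by
  classical
  conv_lhs => rw [← DirectSum.sum_support_decompose 𝒜 x]
  rw [map_sum, DirectSum.decompose_sum, DFinsupp.finset_sum_apply,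
    AddSubmonoidClass.coe_finset_sum]
  rw [Finset.sum_eq_single i]
  · rw [DirectSum.decompose_of_mem_same ℬ (hρgr i _ (SetLike.coe_mem _))]
  · intro j _ hj
    rw [DirectSum.decompose_of_mem_ne ℬ (hρgr j _ (SetLike.coe_mem _)) hj]
  · intro h
    rw [DFinsupp.notMem_support_iff.mp h]
    simp



/-- Let `B` be a graded-commutative `K`-algebra with unit in `B⁰` and
`dim_K B⁰ = 1`, let `A` be a Poincaré `n`-self-dual graded-commutative `K`-algebra,
`ρ : B → A` a surjective homomorphism of graded `K`-algebras, and `φ : Aⁿ ≃ K` a linear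
isomorphism.  Define `ℓ : B → K` by `ℓ(b) = φ(ρ(b))` on `Bⁿ` and `ℓ = 0` on `Bᵐ` for `m ≠ n`.
Then `ℓ` is `n`-homogeneous (i.e. `ℓ ≠ 0`, the vanishing being built into its definition),
the kernel of `ρ` equals `I(L_ℓ) = {a | ℓ(ab) = 0 for all b}`, and consequently `A` is
isomorphic (as a graded `K`-algebra, the isomorphism being compatible with `ρ` and hence with
the gradings) to the quotient of `B` by `I(L_ℓ)`. -/
theorem stmt0 {K B A : Type*} [Field K] [Ring B] [Algebra K B] [Ring A] [Algebra K A]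
    (𝒜 : ℕ → Submodule K B) [GradedAlgebra 𝒜]
    (ℬ : ℕ → Submodule K A) [GradedAlgebra ℬ]
    (hBcomm : ∀ (i j : ℕ) (x y : B), x ∈ 𝒜 i → y ∈ 𝒜 j →
      x * y = (-1 : B) ^ (i * j) * (y * x))
    (hAcomm : ∀ (i j : ℕ) (x y : A), x ∈ ℬ i → y ∈ ℬ j →
      x * y = (-1 : A) ^ (i * j) * (y * x))
    (hB0 : Module.finrank K (𝒜 0) = 1)
    (n : ℕ)
    -- `A` is Poincaré `n`-self-dual:
    (hAtop : ∀ k : ℕ, n < k → ℬ k = ⊥)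
    (hAn : Module.finrank K (ℬ n) = 1)
    (hAnd₁ : ∀ k ≤ n, ∀ x ∈ ℬ k, (∀ y ∈ ℬ (n - k), x * y = 0) → x = 0)
    (hAnd₂ : ∀ k ≤ n, ∀ y ∈ ℬ (n - k), (∀ x ∈ ℬ k, x * y = 0) → y = 0)
    -- `ρ` is a surjective homomorphism of graded `K`-algebras:
    (ρ : B →ₐ[K] A) (hρsurj : Function.Surjective ρ)
    (hρgr : ∀ i : ℕ, ∀ x ∈ 𝒜 i, ρ x ∈ ℬ i)
    (φ : (ℬ n) ≃ₗ[K] K)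
    -- `ℓ(b) = φ(ρ(b))` for `b ∈ Bⁿ`, and `ℓ = 0` on `Bᵐ` for `m ≠ n`:
    (ℓ : B →ₗ[K] K)
    (hℓvan : ∀ m : ℕ, m ≠ n → ∀ x ∈ 𝒜 m, ℓ x = 0)
    (hℓn : ∀ x ∈ 𝒜 n, ∀ y : (ℬ n), (y : A) = ρ x → ℓ x = φ y) :
    ℓ ≠ 0 ∧
    (∀ a : B, ρ a = 0 ↔ ∀ b : B, ℓ (a * b) = 0) ∧
    ∃ (c : RingCon B) (ψ : c.Quotient ≃+* A),
      (∀ a : B, c a 0 ↔ ∀ b : B, ℓ (a * b) = 0) ∧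
      ∀ b : B, ψ (c.mk' b) = ρ b := by
  classical
  -- ℓ x = φ of the n-th component of ρ x
  have hℓdec : ∀ x : B, ℓ x = ℓ (DirectSum.decompose 𝒜 x n) := by
    intro x
    conv_lhs => rw [← DirectSum.sum_support_decompose 𝒜 x]
    rw [map_sum, Finset.sum_eq_single n]
    · intro j _ hj
      exact hℓvan j hj _ (SetLike.coe_mem _)
    · intro h
      rw [DFinsupp.notMem_support_iff.mp h]
      simp
  have hℓφ : ∀ x : B, ℓ x = φ (DirectSum.decompose ℬ (ρ x) n) := by
    intro x
    rw [hℓdec x]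
    exact hℓn _ (SetLike.coe_mem _) _ (keylem 𝒜 ℬ ρ hρgr x n)
  -- part 2
  have part2 : ∀ a : B, ρ a = 0 ↔ ∀ b : B, ℓ (a * b) = 0 := by
    intro a
    constructor
    · intro ha b
      rw [hℓφ]
      have : ρ (a * b) = 0 := by rw [map_mul, ha, zero_mul]
      rw [this]
      simp
    · intro h
      rw [← DirectSum.sum_support_decompose ℬ (ρ a)]
      apply Finset.sum_eq_zero
      intro i _
      rcases le_or_gt i n with hin | hin
      · -- use nondegeneracy
        have hmem := SetLike.coe_mem (DirectSum.decompose ℬ (ρ a) i)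
        refine hAnd₁ i hin _ hmem ?_
        intro y hy
        obtain ⟨b', hb'⟩ := hρsurj y
        set b : B := (DirectSum.decompose 𝒜 b' (n - i) : B) with hbdef
        have hρb : ρ b = y := by
          rw [hbdef, ← keylem 𝒜 ℬ ρ hρgr b' (n - i), hb',
            DirectSum.decompose_of_mem_same ℬ hy]
        set ai : B := (DirectSum.decompose 𝒜 a i : B) with haidef
        have haimem : ai * b ∈ 𝒜 n := by
          have := SetLike.mul_mem_graded (SetLike.coe_mem (DirectSum.decompose 𝒜 a i))
            (SetLike.coe_mem (DirectSum.decompose 𝒜 b' (n - i)))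
          rwa [Nat.add_sub_cancel' hin] at this
        -- ℓ (ai * b) = ℓ (a * b) = 0
        have hsum : ℓ (a * b) = ℓ (ai * b) := by
          conv_lhs => rw [← DirectSum.sum_support_decompose 𝒜 a, Finset.sum_mul, map_sum]
          rw [Finset.sum_eq_single i]
          · intro j _ hj
            have hjm : (DirectSum.decompose 𝒜 a j : B) * b ∈ 𝒜 (j + (n - i)) :=
              SetLike.mul_mem_graded (SetLike.coe_mem _) (SetLike.coe_mem _)
            refine hℓvan _ ?_ _ hjm
            intro hc
            apply hj
            have : j + (n - i) = i + (n - i) := by rw [hc, Nat.add_sub_cancel' hin]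
            exact Nat.add_right_cancel this
          · intro hns
            rw [DFinsupp.notMem_support_iff.mp hns]
            simp
        have hz : ℓ (ai * b) = 0 := by rw [← hsum]; exact h b
        have := hℓn _ haimem ⟨ρ (ai * b), hρgr n _ haimem⟩ rfl
        rw [this] at hz
        have h0 : (⟨ρ (ai * b), hρgr n _ haimem⟩ : ℬ n) = 0 := by
          apply φ.injective
          rw [hz, map_zero]
        have : ρ (ai * b) = 0 := congrArg Subtype.val h0
        rw [map_mul, hρb, haidef, ← keylem 𝒜 ℬ ρ hρgr a i] at this
        exact this
      · -- ℬ i = ⊥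
        exact (Submodule.eq_bot_iff _).mp (hAtop i hin) _
          (SetLike.coe_mem (DirectSum.decompose ℬ (ρ a) i))
  -- part 1
  have hnt : Nontrivial (ℬ n) := by
    apply Module.nontrivial_of_finrank_pos (R := K)
    omega
  obtain ⟨y, hy⟩ := exists_ne (0 : ℬ n)
  obtain ⟨s, hs⟩ := hρsurj (y : A)
  have part1 : ℓ ≠ 0 := by
    intro h0
    apply hy
    apply φ.injective
    rw [map_zero]
    have := hℓφ s
    rw [h0] at this
    simp only [LinearMap.zero_apply] at this
    have hdec : DirectSum.decompose ℬ (ρ s) n = y := by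
      apply Subtype.ext
      rw [hs, DirectSum.decompose_of_mem_same ℬ (SetLike.coe_mem y)]
    rw [hdec] at this
    exact this.symm
  refine ⟨part1, part2, ?_⟩
  -- part 3
  set c : RingCon B :=
    { r := fun a b => ρ a = ρ b
      iseqv := ⟨fun _ => rfl, Eq.symm, Eq.trans⟩
      mul' := fun h1 h2 => by simp only [map_mul]; rw [h1, h2]
      add' := fun h1 h2 => by simp only [map_add]; rw [h1, h2] } with hcdef
  have hlift : ∀ (a b : B), c a b → ρ a = ρ b := fun a b h => h
  let f : c.Quotient →+* A :=
    { toFun := Quotient.lift (⇑ρ) hlift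
      map_one' := map_one ρ
      map_mul' := fun x y => Quotient.inductionOn₂ x y fun a b => map_mul ρ a b
      map_zero' := map_zero ρ
      map_add' := fun x y => Quotient.inductionOn₂ x y fun a b => map_add ρ a b }
  have hfbij : Function.Bijective f := by
    constructor
    · intro x y
      refine Quotient.inductionOn₂ x y fun a b h => ?_
      exact Quotient.sound h
    · intro z
      obtain ⟨b, hb⟩ := hρsurj z
      exact ⟨Quotient.mk _ b, hb⟩
  refine ⟨c, RingEquiv.ofBijective f hfbij, ?_, fun b => rfl⟩
  intro a
  have : c a 0 ↔ ρ a = 0 := by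
    constructor
    · intro h; rw [show ρ a = ρ 0 from h, map_zero]
    · intro h; show ρ a = ρ 0; rw [h, map_zero]
  rw [this]
  exact part2 a
end

section
/- Let K be a field of characteristic 0 and A = ⊕_{i=0}^n A_i a finite-dimensional graded commutative K-algebra which is generated as a K-algebra by its degree-one component A_1, has dim_K A_0 = dim_K A_n = 1 with the unit in A_0, and satisfies Poincaré duality: for each 0 ≤ i ≤ n the multiplication pairing A_i × A_{n−i} → A_n is non-degenerate. Fix a K-basis v_1,…,v_r of A_1 and a K-linear isomorphism φ: A_n → K, and let f ∈ K[x_1,…,x_r] be the unique polynomial (homogeneous of degree n) with f(a_1,…,a_r) = φ((a_1 v_1 + ⋯ + a_r v_r)^n) for all (a_1,…,a_r) ∈ K^r. Then A is isomorphic as a graded K-algebra to K[t_1,…,t_r]/J, where each t_i has degree 1 and J = {p ∈ K[t_1,…,t_r] : p(∂/∂x_1,…,∂/∂x_r) f = 0} is the ideal of polynomials p such that the constant-coefficient differential operator obtained from p by substituting ∂/∂x_i for t_i annihilates f. -/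
open MvPolynomial

/-- The iterated partial derivative `∂^α = ∂₁^{α₁} ⋯ ∂ᵣ^{αᵣ}` applied to a polynomial
(the partial derivatives commute, so the order of application is immaterial). -/
noncomputable def iterPDeriv {K : Type*} [CommSemiring K] {r : ℕ}
    (α : Fin r →₀ ℕ) (f : MvPolynomial (Fin r) K) : MvPolynomial (Fin r) K :=
  (List.finRange r).foldr (fun i g => (fun h => MvPolynomial.pderiv i h)^[α i] g) f

/-- The constant-coefficient differential operator `p(∂/∂x₁, …, ∂/∂xᵣ)` obtained from a
polynomial `p` by substituting `∂/∂xᵢ` for `tᵢ`, applied to the polynomial `f`. -/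
noncomputable def diffOpApply {K : Type*} [CommSemiring K] {r : ℕ}
    (p f : MvPolynomial (Fin r) K) : MvPolynomial (Fin r) K :=
  ∑ α ∈ p.support, p.coeff α • iterPDeriv α f

/-!
Let `ψ = aeval v : K[t₁,…,tᵣ] → A` and let `L : A → K` be `φ` composed with the projection onto
`Aₙ`. Since `f(a) = L((∑ aᵢvᵢ)ⁿ)`, the multinomial theorem gives `coeff_α f = (n! / α!) L(v^α)`
for `|α| = n` and `0` otherwise, hence `p(∂) f` has constant term `n! L(ψ p)` for every `p`.
The map `p ↦ p(∂)` is multiplicative, and in characteristic `0` a polynomial vanishes iff every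
`q(∂)` sends it to a polynomial with zero constant term. So `p(∂) f = 0` iff `L(ψ q ψ p) = 0`
for all `q`, and since `ψ` is onto, Poincaré duality turns this into `ψ p = 0`.
-/

open scoped IsMulCommutative

namespace MvPolynomial

variable {σ R : Type*} [CommSemiring R]

theorem pderiv_pderiv_comm (i j : σ) (p : MvPolynomial σ R) :
    pderiv i (pderiv j p) = pderiv j (pderiv i p) := by
  classical
  obtain rfl | hij := eq_or_ne i j
  · rfl
  ext m
  simp only [coeff_pderiv, Finsupp.add_apply, Finsupp.single_eq_of_ne hij,
    Finsupp.single_eq_of_ne hij.symm, add_zero, add_right_comm m]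
  ring

variable (σ R) in
noncomputable abbrev pderivAlgebra : Subalgebra R (Module.End R (MvPolynomial σ R)) :=
  Algebra.adjoin R (Set.range fun i => (pderiv i).toLinearMap)

instance : IsMulCommutative (pderivAlgebra σ R) :=
  Algebra.isMulCommutative_adjoin R <| by
    rintro _ ⟨i, rfl⟩ _ ⟨j, rfl⟩
    exact LinearMap.ext (pderiv_pderiv_comm i j)

/-- `p ↦ p(∂)`. The partial derivatives commute, so this is `aeval` into the commutative
subalgebra of `Module.End` that they generate. -/
noncomputable def diffOp : MvPolynomial σ R →ₐ[R] Module.End R (MvPolynomial σ R) :=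
  (pderivAlgebra σ R).val.comp <|
    aeval fun i => (⟨(pderiv i).toLinearMap, Algebra.subset_adjoin ⟨i, rfl⟩⟩ : pderivAlgebra σ R)

@[simp]
theorem diffOp_X (i : σ) : diffOp (X i : MvPolynomial σ R) = (pderiv i).toLinearMap := by
  simp [diffOp]

theorem coeff_pderiv_pow (j : σ) (k : ℕ) (γ : σ →₀ ℕ) (p : MvPolynomial σ R) :
    coeff γ (((pderiv j).toLinearMap ^ k) p)
      = (γ j + k).descFactorial k * coeff (γ + Finsupp.single j k) p := by
  induction k generalizing γ p with
  | zero => simp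
  | succ k ih =>
    rw [pow_succ, Module.End.mul_apply, ih, Derivation.coeFn_coe, coeff_pderiv, add_assoc,
      ← Finsupp.single_add, Finsupp.add_apply, Finsupp.single_eq_same, ← add_assoc,
      Nat.succ_descFactorial_succ]
    push_cast
    ring

theorem coeff_diffOp_monomial (β γ : σ →₀ ℕ) (p : MvPolynomial σ R) :
    coeff γ (diffOp (monomial β 1) p)
      = β.prod (fun i k => ((γ i + k).descFactorial k : R)) * coeff (γ + β) p := by
  classical
  induction β using Finsupp.induction generalizing γ with
  | zero => simp
  | single_add j k β hj hk ih =>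
    have hdisj : Disjoint (Finsupp.single j k).support β.support := by
      rwa [Finsupp.support_single j hk, Finset.disjoint_singleton_left]
    have hγ : (β.prod fun i l => (((γ + Finsupp.single j k) i + l).descFactorial l : R))
        = β.prod fun i l => ((γ i + l).descFactorial l : R) :=
      Finsupp.prod_congr fun i hi => by
        rw [Finsupp.add_apply, Finsupp.single_eq_of_ne (ne_of_mem_of_not_mem hi hj), add_zero]
    rw [monomial_single_add, map_mul, map_pow, diffOp_X, Module.End.mul_apply, coeff_pderiv_pow,
      ih, hγ, Finsupp.prod_add_index_of_disjoint hdisj, Finsupp.prod_single_index (by simp),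
      mul_assoc, add_assoc]

theorem constantCoeff_diffOp_monomial (β : σ →₀ ℕ) (p : MvPolynomial σ R) :
    constantCoeff (diffOp (monomial β 1) p)
      = β.prod (fun _ k => (k.factorial : R)) * coeff β p := by
  simp [constantCoeff_eq, coeff_diffOp_monomial, Nat.descFactorial_self]

theorem eq_zero_of_forall_constantCoeff_diffOp_eq_zero [NoZeroDivisors R] [CharZero R]
    {p : MvPolynomial σ R} (h : ∀ q, constantCoeff (diffOp q p) = 0) : p = 0 := by
  ext β
  have := h (monomial β 1)
  rw [constantCoeff_diffOp_monomial] at this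
  refine (mul_eq_zero.mp this).resolve_left ?_
  rw [Finsupp.prod, ← Nat.cast_prod, Nat.cast_eq_zero]
  exact Finset.prod_ne_zero_iff.mpr fun _ _ => Nat.factorial_ne_zero _

end MvPolynomial

theorem Module.End.list_prod_map_apply_eq_foldr {R M ι : Type*} [Semiring R] [AddCommMonoid M]
    [Module R M] (l : List ι) (T : ι → Module.End R M) (x : M) :
    (l.map T).prod x = l.foldr (fun i y => T i y) x := by
  induction l with
  | nil => rfl
  | cons i l ih => simp [ih]

section DiffOpApply

variable {R : Type*} [CommSemiring R] {r : ℕ}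

theorem iterPDeriv_eq_diffOp_monomial (α : Fin r →₀ ℕ) (f : MvPolynomial (Fin r) R) :
    iterPDeriv α f = diffOp (monomial α 1) f := by
  rw [monomial_eq, C_1, one_mul, Finsupp.prod_fintype _ _ (fun _ => pow_zero _),
    Fin.prod_univ_def, map_list_prod, List.map_map, Module.End.list_prod_map_apply_eq_foldr]
  simp [iterPDeriv, Module.End.pow_apply]

theorem diffOpApply_eq_diffOp (p f : MvPolynomial (Fin r) R) : diffOpApply p f = diffOp p f := by
  conv_rhs => rw [p.as_sum]
  rw [diffOpApply, map_sum, LinearMap.sum_apply]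
  refine Finset.sum_congr rfl fun α _ => ?_
  rw [iterPDeriv_eq_diffOp_monomial, ← LinearMap.smul_apply, ← map_smul, smul_monomial,
    smul_eq_mul, mul_one]

end DiffOpApply

namespace MvPolynomial

variable {σ K A : Type*} [CommRing K] [CommSemiring A] [Algebra K A]

theorem coeff_eq_of_forall_eval_eq [IsDomain K] [Infinite K] (L : A →ₗ[K] K)
    {f : MvPolynomial σ K} {g : MvPolynomial σ A}
    (h : ∀ a, eval a f = L (eval (algebraMap K A ∘ a) g)) (α : σ →₀ ℕ) :
    coeff α f = L (coeff α g) := by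
  classical
  have hf : f = ∑ β ∈ g.support, monomial β (L (coeff β g)) := funext fun a => by
    rw [h, eval_eq, map_sum, map_sum]
    refine Finset.sum_congr rfl fun β _ => ?_
    rw [eval_monomial, Finsupp.prod, Function.comp_def]
    simp_rw [← map_pow, ← map_prod, mul_comm (coeff β g), ← Algebra.smul_def, map_smul,
      smul_eq_mul, mul_comm]
  rw [hf, coeff_sum]
  simp only [coeff_monomial, Finset.sum_ite_eq', mem_support_iff]
  split_ifs with hα
  · rfl
  · rw [not_not.mp hα, map_zero]

theorem coeff_eq_of_forall_eval_eq_pow [IsDomain K] [Infinite K] [Fintype σ] (L : A →ₗ[K] K)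
    (v : σ → A) {f : MvPolynomial σ K} {n : ℕ}
    (hf : ∀ a, eval a f = L ((∑ i, a i • v i) ^ n)) (α : σ →₀ ℕ) :
    coeff α f = if α.degree = n then α.multinomial * L (aeval v (monomial α (1 : K))) else 0 := by
  have heval : ∀ a, eval a f = L (eval (algebraMap K A ∘ a) ((∑ i, v i • X i) ^ n)) := fun a => by
    simp [hf, Algebra.smul_def, mul_comm]
  have hdeg : (α.sum fun _ m => m) = α.degree := rfl
  rw [coeff_eq_of_forall_eval_eq L heval, coeff_linearCombination_X_pow_of_fintype, hdeg,
    aeval_monomial, map_one, one_mul]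
  split_ifs <;> simp [← nsmul_eq_mul]

theorem isHomogeneous_of_forall_eval_eq_pow [IsDomain K] [Infinite K] [Fintype σ]
    (L : A →ₗ[K] K) (v : σ → A) {f : MvPolynomial σ K} {n : ℕ}
    (hf : ∀ a, eval a f = L ((∑ i, a i • v i) ^ n)) : f.IsHomogeneous n := by
  intro α hα
  rw [coeff_eq_of_forall_eval_eq_pow L v hf] at hα
  rw [Pi.one_def, ← Finsupp.degree_eq_weight_one]
  exact of_not_not fun h => hα (if_neg h)

theorem constantCoeff_diffOp_of_forall_eval_eq_pow [IsDomain K] [Infinite K] [Fintype σ]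
    (L : A →ₗ[K] K) (v : σ → A) {f : MvPolynomial σ K} {n : ℕ}
    (hf : ∀ a, eval a f = L ((∑ i, a i • v i) ^ n))
    (hL : ∀ α : σ →₀ ℕ, α.degree ≠ n → L (aeval v (monomial α (1 : K))) = 0)
    (p : MvPolynomial σ K) :
    constantCoeff (diffOp p f) = n.factorial * L (aeval v p) := by
  induction p using induction_on' with
  | monomial α c =>
    have hc : monomial α c = c • monomial α 1 := by rw [smul_monomial, smul_eq_mul, mul_one]
    rw [hc, map_smul, LinearMap.smul_apply, constantCoeff_smul, constantCoeff_diffOp_monomial,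
      coeff_eq_of_forall_eval_eq_pow L v hf, map_smul, map_smul, smul_eq_mul, smul_eq_mul]
    split_ifs with hα
    · have hspec : (α.prod fun _ k => (k.factorial : K)) * α.multinomial = n.factorial := by
        rw [← hα, Finsupp.degree_apply, Finsupp.prod, Finsupp.multinomial_eq]
        exact_mod_cast congrArg (Nat.cast (R := K)) (Nat.multinomial_spec α.support α)
      linear_combination (c * L (aeval v (monomial α (1 : K)))) * hspec
    · rw [hL α hα, mul_zero, mul_zero, mul_zero]
  | add p q hp hq => rw [map_add, LinearMap.add_apply, map_add, hp, hq, map_add, map_add, mul_add]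

theorem diffOp_apply_eq_zero_iff [NoZeroDivisors K] [CharZero K] {ψ : MvPolynomial σ K →ₐ[K] A}
    (hψ : Function.Surjective ψ) (L : A →ₗ[K] K) (hL : ∀ x, (∀ y, L (x * y) = 0) → x = 0)
    {c : K} (hc : c ≠ 0) {f : MvPolynomial σ K}
    (hf : ∀ p, constantCoeff (diffOp p f) = c * L (ψ p)) (p : MvPolynomial σ K) :
    diffOp p f = 0 ↔ ψ p = 0 := by
  constructor
  · refine fun h => hL _ fun y => ?_
    obtain ⟨q, rfl⟩ := hψ y
    have := hf (q * p)
    rw [map_mul, Module.End.mul_apply, h, map_zero, map_zero, map_mul, mul_comm (ψ q)] at this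
    exact (mul_eq_zero.mp this.symm).resolve_left hc
  · refine fun h => eq_zero_of_forall_constantCoeff_diffOp_eq_zero fun q => ?_
    rw [← Module.End.mul_apply, ← map_mul, hf, map_mul, h, mul_zero, map_zero, mul_zero]

end MvPolynomial

namespace GradedAlgebra

open DirectSum

variable {K A : Type*} [CommRing K] [Ring A] [Algebra K A] (𝒜 : ℕ → Submodule K A) [GradedAlgebra 𝒜]
  {n : ℕ}

noncomputable def componentFunctional (φ : 𝒜 n →ₗ[K] K) : A →ₗ[K] K :=
  φ ∘ₗ component K ℕ (fun i => 𝒜 i) n ∘ₗ (decomposeLinearEquiv 𝒜).toLinearMap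

variable {𝒜} (φ : 𝒜 n →ₗ[K] K)

theorem componentFunctional_apply (x : A) : componentFunctional 𝒜 φ x = φ (decompose 𝒜 x n) :=
  rfl

theorem componentFunctional_of_mem {x : A} (hx : x ∈ 𝒜 n) :
    componentFunctional 𝒜 φ x = φ ⟨x, hx⟩ := by
  rw [componentFunctional_apply, decompose_of_mem 𝒜 hx, of_eq_same]

theorem componentFunctional_of_mem_of_ne {x : A} {d : ℕ} (hx : x ∈ 𝒜 d) (hd : d ≠ n) :
    componentFunctional 𝒜 φ x = 0 := by
  rw [componentFunctional_apply, decompose_of_mem 𝒜 hx, of_eq_of_ne _ _ _ hd.symm, map_zero]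

theorem eq_zero_of_forall_componentFunctional_mul_eq_zero (hφ : Function.Injective φ)
    (hbound : ∀ i, n < i → 𝒜 i = ⊥)
    (hPD : ∀ i ≤ n, ∀ x ∈ 𝒜 i, (∀ y ∈ 𝒜 (n - i), x * y = 0) → x = 0)
    {x : A} (hx : ∀ y, componentFunctional 𝒜 φ (x * y) = 0) : x = 0 := by
  classical
  rw [← sum_support_decompose 𝒜 x]
  refine Finset.sum_eq_zero fun d _ => ?_
  rcases le_or_gt d n with hd | hd
  · refine hPD d hd _ (decompose 𝒜 x d).2 fun y hy => ?_
    have hxy := hx y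
    rw [componentFunctional_apply, ← map_zero φ] at hxy
    have := congrArg Subtype.val (hφ hxy)
    rwa [coe_decompose_mul_of_right_mem_of_le 𝒜 hy (Nat.sub_le n d), Nat.sub_sub_self hd] at this
  · simpa [hbound d hd] using (decompose 𝒜 x d).2

end GradedAlgebra

theorem MvPolynomial.aeval_mem_of_isHomogeneous {σ K A : Type*} [CommSemiring K] [CommSemiring A]
    [Algebra K A] (𝒜 : ℕ → Submodule K A) [SetLike.GradedMonoid 𝒜] {v : σ → A}
    (hv : ∀ i, v i ∈ 𝒜 1) {d : ℕ} {p : MvPolynomial σ K} (hp : p.IsHomogeneous d) :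
    aeval v p ∈ 𝒜 d := by
  rw [p.as_sum, map_sum]
  refine Submodule.sum_mem _ fun β hβ => ?_
  rw [aeval_monomial, ← Algebra.smul_def]
  refine Submodule.smul_mem _ _ ?_
  have hdeg := hp (mem_support_iff.mp hβ)
  rw [Finsupp.weight_apply] at hdeg
  simpa [Finsupp.sum, Finsupp.prod, ← hdeg] using
    SetLike.prod_pow_mem_graded 𝒜 (fun _ => 1) v β fun i _ => hv i

theorem stmt1_general {K A : Type*} [Field K] [CharZero K] [CommRing A] [Algebra K A]
    (𝒜 : ℕ → Submodule K A) [GradedAlgebra 𝒜]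
    (n : ℕ)
    (hbound : ∀ i : ℕ, n < i → 𝒜 i = ⊥)
    (hgen : Algebra.adjoin K (𝒜 1 : Set A) = ⊤)
    (hPD : ∀ i ≤ n, ∀ x ∈ 𝒜 i, (∀ y ∈ 𝒜 (n - i), x * y = 0) → x = 0)
    (r : ℕ) (v : Fin r → A)
    -- `v₁, …, vᵣ` is a `K`-basis of `A₁`:
    (hv1 : ∀ i, v i ∈ 𝒜 1)
    (hvspan : Submodule.span K (Set.range v) = 𝒜 1)
    (φ : (𝒜 n) ≃ₗ[K] K)
    (f : MvPolynomial (Fin r) K)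
    (hf : ∀ a : Fin r → K, ∀ h : (∑ i, a i • v i) ^ n ∈ 𝒜 n,
      MvPolynomial.eval a f = φ ⟨(∑ i, a i • v i) ^ n, h⟩) :
    MvPolynomial.IsHomogeneous f n ∧
    ∃ ψ : MvPolynomial (Fin r) K →ₐ[K] A,
      Function.Surjective ψ ∧
      (∀ p : MvPolynomial (Fin r) K, ψ p = 0 ↔ diffOpApply p f = 0) ∧
      (∀ (d : ℕ) (p : MvPolynomial (Fin r) K), MvPolynomial.IsHomogeneous p d → ψ p ∈ 𝒜 d) := by
  have : Infinite K := Infinite.of_injective _ Nat.cast_injective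
  set L := GradedAlgebra.componentFunctional 𝒜 φ.toLinearMap
  have hmem {d : ℕ} {p : MvPolynomial (Fin r) K} (hp : p.IsHomogeneous d) : aeval v p ∈ 𝒜 d :=
    aeval_mem_of_isHomogeneous 𝒜 hv1 hp
  have hfL (a : Fin r → K) : eval a f = L ((∑ i, a i • v i) ^ n) := by
    have h : (∑ i, a i • v i) ^ n ∈ 𝒜 n := by
      simpa using SetLike.pow_mem_graded n
        (Submodule.sum_mem _ fun i _ => Submodule.smul_mem _ (a i) (hv1 i))
    rw [hf a h, GradedAlgebra.componentFunctional_of_mem _ h]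
    rfl
  have hL (α : Fin r →₀ ℕ) (hα : α.degree ≠ n) : L (aeval v (monomial α (1 : K))) = 0 :=
    GradedAlgebra.componentFunctional_of_mem_of_ne _ (hmem (isHomogeneous_monomial _ rfl)) hα
  have hnondeg (x : A) (hx : ∀ y, L (x * y) = 0) : x = 0 :=
    GradedAlgebra.eq_zero_of_forall_componentFunctional_mul_eq_zero _ φ.injective hbound hPD hx
  have hsurj : Function.Surjective (aeval v : MvPolynomial (Fin r) K →ₐ[K] A) := by
    rw [← AlgHom.range_eq_top, ← Algebra.adjoin_range_eq_range_aeval, ← Algebra.adjoin_span,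
      hvspan, hgen]
  refine ⟨isHomogeneous_of_forall_eval_eq_pow L v hfL, aeval v, hsurj, fun p => ?_,
    fun d p hp => hmem hp⟩
  rw [diffOpApply_eq_diffOp]
  exact (diffOp_apply_eq_zero_iff hsurj L hnondeg (Nat.cast_ne_zero.mpr n.factorial_ne_zero)
    (constantCoeff_diffOp_of_forall_eval_eq_pow L v hfL hL) p).symm

/-- Theorem of Pukhlikov–Khovanskii.  Let `K` be a field of characteristic
`0` and `A = ⊕_{i=0}^n Aᵢ` a finite-dimensional graded commutative `K`-algebra generated by
`A₁`, with `dim A₀ = dim Aₙ = 1` and Poincaré duality.  Fix a basis `v₁, …, vᵣ` of `A₁` and a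
linear isomorphism `φ : Aₙ ≃ K`, and let `f` be the unique polynomial with
`f(a₁,…,aᵣ) = φ((a₁v₁ + ⋯ + aᵣvᵣ)ⁿ)`.  Then `f` is homogeneous of degree `n` and `A` is
isomorphic as a graded `K`-algebra to `K[t₁,…,tᵣ]/J`, where each `tᵢ` has degree `1` and
`J = {p : p(∂/∂x₁,…,∂/∂xᵣ) f = 0}` (the isomorphism being witnessed by a surjective graded
algebra homomorphism `ψ : K[t₁,…,tᵣ] → A` with kernel exactly `J`). -/
theorem stmt1 {K A : Type*} [Field K] [CharZero K] [CommRing A] [Algebra K A]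
    (𝒜 : ℕ → Submodule K A) [GradedAlgebra 𝒜] [FiniteDimensional K A]
    (n : ℕ)
    (hbound : ∀ i : ℕ, n < i → 𝒜 i = ⊥)
    (hgen : Algebra.adjoin K (𝒜 1 : Set A) = ⊤)
    (h0 : Module.finrank K (𝒜 0) = 1)
    (hn : Module.finrank K (𝒜 n) = 1)
    (hPD : ∀ i ≤ n, ∀ x ∈ 𝒜 i, (∀ y ∈ 𝒜 (n - i), x * y = 0) → x = 0)
    (r : ℕ) (v : Fin r → A)
    -- `v₁, …, vᵣ` is a `K`-basis of `A₁`: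
    (hv1 : ∀ i, v i ∈ 𝒜 1)
    (hvli : LinearIndependent K v)
    (hvspan : Submodule.span K (Set.range v) = 𝒜 1)
    (φ : (𝒜 n) ≃ₗ[K] K)
    (f : MvPolynomial (Fin r) K)
    (hf : ∀ a : Fin r → K, ∀ h : (∑ i, a i • v i) ^ n ∈ 𝒜 n,
      MvPolynomial.eval a f = φ ⟨(∑ i, a i • v i) ^ n, h⟩) :
    MvPolynomial.IsHomogeneous f n ∧
    ∃ ψ : MvPolynomial (Fin r) K →ₐ[K] A,
      Function.Surjective ψ ∧
      (∀ p : MvPolynomial (Fin r) K, ψ p = 0 ↔ diffOpApply p f = 0) ∧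
      (∀ (d : ℕ) (p : MvPolynomial (Fin r) K), MvPolynomial.IsHomogeneous p d → ψ p ∈ 𝒜 d) :=
  stmt1_general 𝒜 n hbound hgen hPD r v hv1 hvspan φ f hf
end

section
/- For any hyperplane L ⊆ B^n (a K-subspace with dim_K(B^n/L) = 1), the ideal I(L) ⊆ B is an n-sd ideal: it is a two-sided homogeneous ideal and the factor algebra B/I(L) is Poincaré n-self-dual. -/
/-- Let `B` be a graded-commutative `K`-algebra with unit in `B⁰` and
`dim_K B⁰ = 1`.  For any hyperplane `L ⊆ Bⁿ` (a `K`-subspace with `dim_K (Bⁿ/L) = 1`),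
cut out on `Bⁿ` by an `n`-homogeneous linear function `ℓ`, the ideal
`I(L) = {a ∈ B : ℓ(ab) = 0 for all b ∈ B}` is an `n`-sd ideal: it is a two-sided
homogeneous ideal and the factor algebra `B/I(L)`, with the induced grading, is Poincaré
`n`-self-dual. -/
theorem stmt7 {K B : Type*} [Field K] [Ring B] [Algebra K B]
    (𝒜 : ℕ → Submodule K B) [GradedAlgebra 𝒜]
    (hBcomm : ∀ (i j : ℕ) (x y : B), x ∈ 𝒜 i → y ∈ 𝒜 j →
      x * y = (-1 : B) ^ (i * j) * (y * x))
    (hB0 : Module.finrank K (𝒜 0) = 1)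
    (n : ℕ)
    -- a hyperplane `L ⊆ Bⁿ`:
    (L : Submodule K (𝒜 n)) (hL : Module.finrank K ((𝒜 n) ⧸ L) = 1)
    -- an `n`-homogeneous linear function `ℓ` with `L = {ℓ = 0} ∩ Bⁿ`:
    (ℓ : B →ₗ[K] K) (hℓ : ℓ ≠ 0)
    (hℓvan : ∀ m : ℕ, m ≠ n → ∀ x ∈ 𝒜 m, ℓ x = 0)
    (hℓL : ∀ x : (𝒜 n), ℓ x = 0 ↔ x ∈ L) :
    -- `I(L)` is an `n`-sd ideal:
    ∃ J : Submodule K B,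
      (J : Set B) = {a : B | ∀ b : B, ℓ (a * b) = 0} ∧
      -- it is a two-sided homogeneous ideal,
      (∀ a b : B, a ∈ J → a * b ∈ J) ∧
      (∀ a b : B, a ∈ J → b * a ∈ J) ∧
      (∀ a ∈ J, ∀ i : ℕ, GradedRing.proj 𝒜 i a ∈ J) ∧
      -- and the factor algebra `B/J`, with its induced grading, is `n`-self-dual:
      (∀ k : ℕ, n < k → 𝒜 k ≤ J) ∧
      Module.finrank K ((𝒜 n).map J.mkQ) = 1 ∧
      (∀ k ≤ n, ∀ x ∈ 𝒜 k, x ∉ J → ∃ y ∈ 𝒜 (n - k), x * y ∉ J) ∧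
      (∀ k ≤ n, ∀ y ∈ 𝒜 (n - k), y ∉ J → ∃ x ∈ 𝒜 k, x * y ∉ J) := by
  classical
  -- decomposition sum
  have hsum : ∀ a : B, ∑ i ∈ DFinsupp.support (DirectSum.decompose 𝒜 a),
      ((DirectSum.decompose 𝒜 a i : 𝒜 i) : B) = a := DirectSum.sum_support_decompose 𝒜
  -- key vanishing lemma
  have key : ∀ (i j : ℕ) (x y : B), x ∈ 𝒜 i → y ∈ 𝒜 j → i + j ≠ n → ℓ (x * y) = 0 :=
    fun i j x y hx hy h => hℓvan _ h _ (SetLike.mul_mem_graded hx hy)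
  have L2 : ∀ (i j : ℕ) (x : B), x ∈ 𝒜 i → i + j = n → ∀ a : B,
      ℓ (x * ((DirectSum.decompose 𝒜 a j : 𝒜 j) : B)) = ℓ (x * a) := by
    intro i j x hx hij a
    conv_rhs => rw [← hsum a]
    rw [Finset.mul_sum, map_sum, Finset.sum_eq_single j]
    · intro b _ hbj
      exact key i b _ _ hx (SetLike.coe_mem _) (by omega)
    · intro hj
      rw [DFinsupp.notMem_support_iff.mp hj]
      simp
  have L1 : ∀ (i j : ℕ) (y : B), y ∈ 𝒜 i → i + j = n → ∀ a : B,
      ℓ (((DirectSum.decompose 𝒜 a j : 𝒜 j) : B) * y) = ℓ (a * y) := by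
    intro i j y hy hij a
    conv_rhs => rw [← hsum a]
    rw [Finset.sum_mul, map_sum, Finset.sum_eq_single j]
    · intro b _ hbj
      exact key b i _ _ (SetLike.coe_mem _) hy (by omega)
    · intro hj
      rw [DFinsupp.notMem_support_iff.mp hj]
      simp
  have Hgt : ∀ i : ℕ, n < i → ∀ x ∈ 𝒜 i, ∀ a : B, ℓ (x * a) = 0 := by
    intro i hi x hx a
    rw [← hsum a, Finset.mul_sum, map_sum]
    apply Finset.sum_eq_zero
    intro b _
    exact key i b _ _ hx (SetLike.coe_mem _) (by omega)
  have hcomm0 : ∀ (i j : ℕ) (x y : B), x ∈ 𝒜 i → y ∈ 𝒜 j →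
      ℓ (x * y) = 0 → ℓ (y * x) = 0 := by
    intro i j x y hx hy h0
    rw [hBcomm j i y x hy hx]
    rcases Nat.even_or_odd (j * i) with h | h
    · rw [h.neg_one_pow, one_mul]; exact h0
    · rw [h.neg_one_pow, neg_one_mul, map_neg, h0, neg_zero]
  -- the ideal J
  let J : Submodule K B :=
    { carrier := {a : B | ∀ b : B, ℓ (a * b) = 0}
      add_mem' := fun {a b} ha hb c => by rw [add_mul, map_add, ha c, hb c, add_zero]
      zero_mem' := fun b => by rw [zero_mul, map_zero]
      smul_mem' := fun c a ha b => by rw [smul_mul_assoc, map_smul, ha b, smul_zero] }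
  have hJ : ∀ a : B, a ∈ J ↔ ∀ b : B, ℓ (a * b) = 0 := fun a => Iff.rfl
  -- right ideal
  have hright : ∀ a b : B, a ∈ J → a * b ∈ J := by
    intro a b ha
    refine (hJ _).2 fun c => ?_
    rw [mul_assoc]
    exact (hJ a).1 ha (b * c)
  -- symmetric characterization
  have Jsymm : ∀ a : B, a ∈ J → ∀ b : B, ℓ (b * a) = 0 := by
    intro a ha b
    rw [← hsum b, Finset.sum_mul, map_sum]
    apply Finset.sum_eq_zero
    intro i _
    by_cases hin : i ≤ n
    · rw [← L2 i (n - i) _ (SetLike.coe_mem _) (by omega) a]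
      apply hcomm0 (n - i) i _ _ (SetLike.coe_mem _) (SetLike.coe_mem _)
      rw [L1 i (n - i) _ (SetLike.coe_mem _) (by omega) a]
      exact (hJ a).1 ha _
    · exact Hgt i (by omega) _ (SetLike.coe_mem _) a
  -- ℓ vanishes on J
  have hJker : ∀ a ∈ J, ℓ a = 0 := by
    intro a ha
    have := (hJ a).1 ha 1
    rwa [mul_one] at this
  have h1B : (1 : B) ∈ 𝒜 0 := SetLike.one_mem_graded 𝒜
  have hb0ex : ∃ b : B, ℓ b ≠ 0 := by
    by_contra h
    push_neg at h
    exact hℓ (LinearMap.ext fun x => by rw [h x, LinearMap.zero_apply])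
  obtain ⟨b0, hb0⟩ := hb0ex
  have hBnt : Nontrivial B := nontrivial_of_ne b0 0 (fun h => hb0 (by rw [h, map_zero]))
  have hone : (⟨1, h1B⟩ : 𝒜 0) ≠ 0 := by
    intro h
    exact one_ne_zero (congrArg (Subtype.val) h)
  have h𝒜0 : ∀ z : 𝒜 0, ∃ c : K, (z : B) = c • (1 : B) := by
    intro z
    obtain ⟨c, hc⟩ := (finrank_eq_one_iff_of_nonzero' (⟨1, h1B⟩ : 𝒜 0) hone).1 hB0 z
    exact ⟨c, by rw [← hc]; rfl⟩
  have hn_mem : ∀ x ∈ 𝒜 n, ℓ x = 0 → x ∈ J := by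
    intro x hx h0
    refine (hJ x).2 fun b => ?_
    rw [← hsum b, Finset.mul_sum, map_sum]
    apply Finset.sum_eq_zero
    intro d _
    by_cases hd0 : d = 0
    · subst hd0
      obtain ⟨c, hc⟩ := h𝒜0 (DirectSum.decompose 𝒜 b 0)
      rw [hc, mul_smul_comm, mul_one, map_smul, h0, smul_zero]
    · exact key n d _ _ hx (SetLike.coe_mem _) (by omega)
  -- a degree-n element with nonzero ℓ
  have hxn : ℓ ((DirectSum.decompose 𝒜 b0 n : 𝒜 n) : B) = ℓ b0 := by
    conv_rhs => rw [← hsum b0]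
    rw [map_sum, Finset.sum_eq_single n]
    · intro m _ hmn
      exact hℓvan m hmn _ (SetLike.coe_mem _)
    · intro hn
      rw [DFinsupp.notMem_support_iff.mp hn]
      simp
  set xn : B := ((DirectSum.decompose 𝒜 b0 n : 𝒜 n) : B) with hxndef
  have hxn0 : ℓ xn ≠ 0 := by rw [hxn]; exact hb0
  have hxnA : xn ∈ 𝒜 n := SetLike.coe_mem _
  refine ⟨J, rfl, hright, ?_, ?_, ?_, ?_, ?_, ?_⟩
  · -- left ideal
    intro a b ha
    refine (hJ _).2 fun c => ?_
    rw [mul_assoc]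
    exact Jsymm (a * c) (hright a c ha) b
  · -- homogeneous
    intro a ha i
    rw [GradedRing.proj_apply]
    refine (hJ _).2 fun b => ?_
    rw [← hsum b, Finset.mul_sum, map_sum]
    apply Finset.sum_eq_zero
    intro d _
    by_cases hdn : i + d = n
    · rw [L1 d i _ (SetLike.coe_mem _) (by omega) a]
      exact (hJ a).1 ha _
    · exact key i d _ _ (SetLike.coe_mem _) (SetLike.coe_mem _) hdn
  · -- high degrees in J
    intro k hk x hx
    exact (hJ x).2 fun b => Hgt k hk x hx b
  · -- finrank of the image of 𝒜 n is 1
    set S : Submodule K (B ⧸ J) := (𝒜 n).map J.mkQ with hSdef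
    have hker : J ≤ LinearMap.ker ℓ := fun a ha => LinearMap.mem_ker.2 (hJker a ha)
    set ℓbar : (B ⧸ J) →ₗ[K] K := J.liftQ ℓ hker with hlbar
    set φ : S →ₗ[K] K := ℓbar.domRestrict S with hφ
    have hφapp : ∀ (x : B) (hx : x ∈ 𝒜 n), φ ⟨J.mkQ x, ⟨x, hx, rfl⟩⟩ = ℓ x := by
      intro x hx
      simp [hφ, hlbar, Submodule.mkQ_apply]
    have hinj : Function.Injective φ := by
      rw [injective_iff_map_eq_zero]
      intro s hs0
      obtain ⟨x, hx, hxs⟩ := s.2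
      have hφx : φ s = ℓ x := by
        have h1 : (s : B ⧸ J) = J.mkQ x := hxs.symm
        simp [hφ, hlbar, LinearMap.domRestrict_apply, h1, Submodule.mkQ_apply]
      have hx0 : ℓ x = 0 := by rw [← hφx]; exact hs0
      have hxJ : x ∈ J := hn_mem x hx hx0
      apply Subtype.ext
      show (s : B ⧸ J) = 0
      rw [← hxs]
      exact (Submodule.Quotient.mk_eq_zero J).2 hxJ
    have hs0mem : J.mkQ xn ∈ S := ⟨xn, hxnA, rfl⟩
    have hsurj : Function.Surjective φ := by
      intro c
      refine ⟨(c * (ℓ xn)⁻¹) • ⟨J.mkQ xn, hs0mem⟩, ?_⟩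
      rw [map_smul, hφapp xn hxnA]
      rw [smul_eq_mul, mul_assoc, inv_mul_cancel₀ hxn0, mul_one]
    have e := LinearEquiv.ofBijective φ ⟨hinj, hsurj⟩
    rw [e.finrank_eq, Module.finrank_self]
  · -- duality, first direction
    intro k hk x hx hxJ
    have : ∃ b : B, ℓ (x * b) ≠ 0 := by
      by_contra h
      push_neg at h
      exact hxJ ((hJ x).2 h)
    obtain ⟨b, hb⟩ := this
    refine ⟨((DirectSum.decompose 𝒜 b (n - k) : 𝒜 (n - k)) : B), SetLike.coe_mem _, ?_⟩
    intro hmem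
    have h0 : ℓ (x * ((DirectSum.decompose 𝒜 b (n - k) : 𝒜 (n - k)) : B)) = 0 := by
      have := (hJ _).1 hmem 1
      rwa [mul_one] at this
    rw [L2 k (n - k) x hx (by omega) b] at h0
    exact hb h0
  · -- duality, second direction
    intro k hk y hy hyJ
    have : ∃ b : B, ℓ (y * b) ≠ 0 := by
      by_contra h
      push_neg at h
      exact hyJ ((hJ y).2 h)
    obtain ⟨b, hb⟩ := this
    refine ⟨((DirectSum.decompose 𝒜 b k : 𝒜 k) : B), SetLike.coe_mem _, ?_⟩
    intro hmem
    have h0 : ℓ (((DirectSum.decompose 𝒜 b k : 𝒜 k) : B) * y) = 0 := by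
      have := (hJ _).1 hmem 1
      rwa [mul_one] at this
    have h1 : ℓ (y * ((DirectSum.decompose 𝒜 b k : 𝒜 k) : B)) = 0 :=
      hcomm0 k (n - k) _ y (SetLike.coe_mem _) hy h0
    rw [L2 (n - k) k y hy (by omega) b] at h1
    exact hb h1
end

section
/- For any hyperplane L ⊆ B^n there is a unique n-sd ideal I ⊆ B such that I ∩ B^n = L, and this ideal coincides with I(L). In particular I(L) ∩ B^n = L, and any n-sd ideal I with I ∩ B^n = L satisfies I ∩ B^k = I(L) ∩ B^k for every k. -/
open DirectSum

section Helpers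

variable {K B : Type*} [Field K] [Ring B] [Algebra K B]
  (𝒜 : ℕ → Submodule K B) [GradedAlgebra 𝒜] (n : ℕ) (ℓ : B →ₗ[K] K)

private lemma stmt8_mul_left (hℓvan : ∀ m : ℕ, m ≠ n → ∀ x ∈ 𝒜 m, ℓ x = 0)
    {k : ℕ} (hk : k ≤ n) {x : B} (hx : x ∈ 𝒜 k) (b : B) :
    ℓ (x * b) = ℓ (x * (DirectSum.decompose 𝒜 b (n - k) : B)) := by
  classical
  conv_lhs => rw [← DirectSum.sum_support_decompose 𝒜 b]
  rw [Finset.mul_sum, map_sum]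
  refine Finset.sum_eq_single _ ?_ ?_
  · intro j _ hjne
    exact hℓvan (k + j) (by omega) _ (SetLike.mul_mem_graded hx (SetLike.coe_mem _))
  · intro hns
    rw [DFinsupp.notMem_support_iff.mp hns]
    simp

private lemma stmt8_mul_right (hℓvan : ∀ m : ℕ, m ≠ n → ∀ x ∈ 𝒜 m, ℓ x = 0)
    {j : ℕ} (hj : j ≤ n) {y : B} (hy : y ∈ 𝒜 j) (a : B) :
    ℓ (a * y) = ℓ ((DirectSum.decompose 𝒜 a (n - j) : B) * y) := by
  classical
  conv_lhs => rw [← DirectSum.sum_support_decompose 𝒜 a]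
  rw [Finset.sum_mul, map_sum]
  refine Finset.sum_eq_single _ ?_ ?_
  · intro i _ hine
    exact hℓvan (i + j) (by omega) _ (SetLike.mul_mem_graded (SetLike.coe_mem _) hy)
  · intro hns
    rw [DFinsupp.notMem_support_iff.mp hns]
    simp

private lemma stmt8_mul_high (hℓvan : ∀ m : ℕ, m ≠ n → ∀ x ∈ 𝒜 m, ℓ x = 0)
    {k : ℕ} (hk : n < k) {x : B} (hx : x ∈ 𝒜 k) (b : B) :
    ℓ (x * b) = 0 := by
  classical
  conv_lhs => rw [← DirectSum.sum_support_decompose 𝒜 b]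
  rw [Finset.mul_sum, map_sum]
  refine Finset.sum_eq_zero fun j _ => ?_
  exact hℓvan (k + j) (by omega) _ (SetLike.mul_mem_graded hx (SetLike.coe_mem _))

private lemma stmt8_top (hℓvan : ∀ m : ℕ, m ≠ n → ∀ x ∈ 𝒜 m, ℓ x = 0) (c : B) :
    ℓ c = ℓ (DirectSum.decompose 𝒜 c n : B) := by
  classical
  conv_lhs => rw [← DirectSum.sum_support_decompose 𝒜 c]
  rw [map_sum]
  refine Finset.sum_eq_single _ ?_ ?_
  · intro j _ hjne
    exact hℓvan j hjne _ (SetLike.coe_mem _)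
  · intro hns
    rw [DFinsupp.notMem_support_iff.mp hns]
    simp

private lemma stmt8_sign (m : ℕ) (z : B) (h : ℓ ((-1 : B) ^ m * z) = 0) : ℓ z = 0 := by
  rcases Nat.even_or_odd m with he | ho
  · rwa [he.neg_one_pow, one_mul] at h
  · rw [ho.neg_one_pow, neg_one_mul, map_neg, neg_eq_zero] at h
    exact h

end Helpers

/-- Let `B` be a graded-commutative `K`-algebra with unit in `B⁰` and
`dim_K B⁰ = 1`.  For any hyperplane `L ⊆ Bⁿ`, cut out on `Bⁿ` by an `n`-homogeneous linear
function `ℓ`, there is a unique `n`-sd ideal `I ⊆ B` with `I ∩ Bⁿ = L`, and it coincides with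
`I(L) = {a : ℓ(ab) = 0 for all b}`.  In particular `I(L) ∩ Bⁿ = L`, and any `n`-sd ideal `I`
with `I ∩ Bⁿ = L` satisfies `I ∩ Bᵏ = I(L) ∩ Bᵏ` for every `k` (indeed `I = I(L)`). -/
theorem stmt8 {K B : Type*} [Field K] [Ring B] [Algebra K B]
    (𝒜 : ℕ → Submodule K B) [GradedAlgebra 𝒜]
    (hBcomm : ∀ (i j : ℕ) (x y : B), x ∈ 𝒜 i → y ∈ 𝒜 j →
      x * y = (-1 : B) ^ (i * j) * (y * x))
    (hB0 : Module.finrank K (𝒜 0) = 1)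
    (n : ℕ)
    -- a hyperplane `L ⊆ Bⁿ`:
    (L : Submodule K (𝒜 n)) (hL : Module.finrank K ((𝒜 n) ⧸ L) = 1)
    -- an `n`-homogeneous linear function `ℓ` with `L = {ℓ = 0} ∩ Bⁿ`:
    (ℓ : B →ₗ[K] K) (hℓ : ℓ ≠ 0)
    (hℓvan : ∀ m : ℕ, m ≠ n → ∀ x ∈ 𝒜 m, ℓ x = 0)
    (hℓL : ∀ x : (𝒜 n), ℓ x = 0 ↔ x ∈ L) :
    -- `I(L) ∩ Bⁿ = L`:
    (∀ x : (𝒜 n), (∀ b : B, ℓ ((x : B) * b) = 0) ↔ x ∈ L) ∧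
    -- existence: `I(L)` is an `n`-sd ideal with `I(L) ∩ Bⁿ = L`:
    (∃ J : Submodule K B,
      (J : Set B) = {a : B | ∀ b : B, ℓ (a * b) = 0} ∧
      (∀ a b : B, a ∈ J → a * b ∈ J) ∧
      (∀ a b : B, a ∈ J → b * a ∈ J) ∧
      (∀ a ∈ J, ∀ i : ℕ, GradedRing.proj 𝒜 i a ∈ J) ∧
      (∀ k : ℕ, n < k → 𝒜 k ≤ J) ∧
      Module.finrank K ((𝒜 n).map J.mkQ) = 1 ∧
      (∀ k ≤ n, ∀ x ∈ 𝒜 k, x ∉ J → ∃ y ∈ 𝒜 (n - k), x * y ∉ J) ∧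
      (∀ k ≤ n, ∀ y ∈ 𝒜 (n - k), y ∉ J → ∃ x ∈ 𝒜 k, x * y ∉ J) ∧
      (∀ x : (𝒜 n), (x : B) ∈ J ↔ x ∈ L)) ∧
    -- uniqueness: any `n`-sd ideal `I` with `I ∩ Bⁿ = L` equals `I(L)`:
    (∀ J : Submodule K B,
      (∀ a b : B, a ∈ J → a * b ∈ J) →
      (∀ a b : B, a ∈ J → b * a ∈ J) →
      (∀ a ∈ J, ∀ i : ℕ, GradedRing.proj 𝒜 i a ∈ J) →
      (∀ k : ℕ, n < k → 𝒜 k ≤ J) →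
      Module.finrank K ((𝒜 n).map J.mkQ) = 1 →
      (∀ k ≤ n, ∀ x ∈ 𝒜 k, x ∉ J → ∃ y ∈ 𝒜 (n - k), x * y ∉ J) →
      (∀ k ≤ n, ∀ y ∈ 𝒜 (n - k), y ∉ J → ∃ x ∈ 𝒜 k, x * y ∉ J) →
      (∀ x : (𝒜 n), (x : B) ∈ J ↔ x ∈ L) →
      (J : Set B) = {a : B | ∀ b : B, ℓ (a * b) = 0}) := by
  classical
  -- `1 ∈ 𝒜 0` spans `𝒜 0`
  have h1mem : (1 : B) ∈ 𝒜 0 := SetLike.one_mem_graded 𝒜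
  have h1ne : (1 : B) ≠ 0 := by
    intro h
    have hsub : Subsingleton B := subsingleton_of_zero_eq_one h.symm
    have : Subsingleton (𝒜 0) := ⟨fun a b => Subtype.ext (Subsingleton.elim _ _)⟩
    rw [Module.finrank_zero_of_subsingleton] at hB0
    exact one_ne_zero hB0.symm
  have hspan : ∀ z ∈ 𝒜 0, ∃ c : K, z = c • (1 : B) := by
    have hv : (⟨1, h1mem⟩ : 𝒜 0) ≠ 0 := fun h => h1ne (congrArg Subtype.val h)
    intro z hz
    obtain ⟨c, hc⟩ := (finrank_eq_one_iff_of_nonzero' _ hv).mp hB0 ⟨z, hz⟩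
    exact ⟨c, by simpa using (congrArg Subtype.val hc).symm⟩
  -- Part 1
  have P1 : ∀ x : (𝒜 n), (∀ b : B, ℓ ((x : B) * b) = 0) ↔ x ∈ L := by
    intro x
    constructor
    · intro h
      have h1 := h 1
      rw [mul_one] at h1
      exact (hℓL x).mp h1
    · intro hx b
      rw [stmt8_mul_left 𝒜 n ℓ hℓvan le_rfl x.2 b, Nat.sub_self]
      obtain ⟨c, hc⟩ := hspan _ (SetLike.coe_mem (DirectSum.decompose 𝒜 b 0))
      rw [hc, mul_smul_comm, mul_one, map_smul, (hℓL x).mpr hx, smul_zero]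
  refine ⟨P1, ?_, ?_⟩
  · -- existence
    set J : Submodule K B :=
      { carrier := {a : B | ∀ b : B, ℓ (a * b) = 0}
        add_mem' := fun ha hb b => by
          rw [add_mul, map_add, ha b, hb b, add_zero]
        zero_mem' := fun b => by rw [zero_mul, map_zero]
        smul_mem' := fun c a ha b => by
          rw [smul_mul_assoc, map_smul, ha b, smul_zero] } with hJdef
    have hJmem : ∀ a : B, a ∈ J ↔ ∀ b : B, ℓ (a * b) = 0 := fun a => Iff.rfl
    have hJhigh : ∀ k : ℕ, n < k → 𝒜 k ≤ J := by
      intro k hk x hx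
      exact fun b => stmt8_mul_high 𝒜 n ℓ hℓvan hk hx b
    have hJproj : ∀ a ∈ J, ∀ i : ℕ, (DirectSum.decompose 𝒜 a i : B) ∈ J := by
      intro a ha i
      by_cases hi : i ≤ n
      · intro b
        rw [stmt8_mul_left 𝒜 n ℓ hℓvan hi (SetLike.coe_mem _) b]
        have h2 := stmt8_mul_right 𝒜 n ℓ hℓvan (Nat.sub_le n i)
          (SetLike.coe_mem (DirectSum.decompose 𝒜 b (n - i))) a
        rw [Nat.sub_sub_self hi] at h2
        rw [← h2]
        exact ha _
      · exact hJhigh i (by omega) (SetLike.coe_mem _)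
    have hJright : ∀ a b : B, a ∈ J → a * b ∈ J := by
      intro a b ha c
      rw [mul_assoc]
      exact ha (b * c)
    have hJleft_hom : ∀ (i : ℕ) (x : B), x ∈ 𝒜 i → ∀ a ∈ J, x * a ∈ J := by
      intro i x hx a ha c
      have hxa : (x * a) * c = ∑ j ∈ (DirectSum.decompose 𝒜 a).support,
          (x * (DirectSum.decompose 𝒜 a j : B)) * c := by
        conv_lhs => rw [← DirectSum.sum_support_decompose 𝒜 a]
        rw [Finset.mul_sum, Finset.sum_mul]
      rw [hxa, map_sum]
      refine Finset.sum_eq_zero fun j _ => ?_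
      have hc := hBcomm i j x _ hx (SetLike.coe_mem (DirectSum.decompose 𝒜 a j))
      rw [hc, mul_assoc]
      rcases Nat.even_or_odd (i * j) with he | ho
      · rw [he.neg_one_pow, one_mul, mul_assoc]
        exact hJproj a ha j (x * c)
      · rw [ho.neg_one_pow, neg_one_mul, map_neg, mul_assoc,
          hJproj a ha j (x * c), neg_zero]
    have hJleft : ∀ a b : B, a ∈ J → b * a ∈ J := by
      intro a b ha
      have hba : b * a = ∑ i ∈ (DirectSum.decompose 𝒜 b).support,
          (DirectSum.decompose 𝒜 b i : B) * a := by
        conv_lhs => rw [← DirectSum.sum_support_decompose 𝒜 b]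
        rw [Finset.sum_mul]
      rw [hba]
      exact Submodule.sum_mem _ fun i _ => hJleft_hom i _ (SetLike.coe_mem _) a ha
    have hJn : ∀ x : (𝒜 n), (x : B) ∈ J ↔ x ∈ L := fun x => P1 x
    -- finrank
    have hfin : Module.finrank K ((𝒜 n).map J.mkQ) = 1 := by
      set f : (𝒜 n) →ₗ[K] (B ⧸ J) := J.mkQ.comp (𝒜 n).subtype with hf
      have hrange : LinearMap.range f = (𝒜 n).map J.mkQ := by
        rw [hf, LinearMap.range_comp, Submodule.range_subtype]
      have hker : LinearMap.ker f = L := by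
        ext x
        have : f x = 0 ↔ (x : B) ∈ J := by
          simp [hf, Submodule.Quotient.mk_eq_zero]
        rw [LinearMap.mem_ker, this]
        exact hJn x
      rw [← hrange]
      have := LinearEquiv.finrank_eq f.quotKerEquivRange
      rw [← this, hker, hL]
    refine ⟨J, rfl, hJright, hJleft, ?_, hJhigh, hfin, ?_, ?_, hJn⟩
    · intro a ha i
      rw [GradedRing.proj_apply]
      exact hJproj a ha i
    · -- nondegeneracy 1
      intro k hk x hx hxJ
      rw [hJmem] at hxJ
      push_neg at hxJ
      obtain ⟨b, hb⟩ := hxJ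
      refine ⟨(DirectSum.decompose 𝒜 b (n - k) : B), SetLike.coe_mem _, ?_⟩
      intro hmem
      apply hb
      rw [stmt8_mul_left 𝒜 n ℓ hℓvan hk hx b]
      have h1 := hmem 1
      rwa [mul_one] at h1
    · -- nondegeneracy 2
      intro k hk y hy hyJ
      rw [hJmem] at hyJ
      push_neg at hyJ
      obtain ⟨b, hb⟩ := hyJ
      have h := stmt8_mul_left 𝒜 n ℓ hℓvan (Nat.sub_le n k) hy b
      rw [Nat.sub_sub_self hk] at h
      refine ⟨(DirectSum.decompose 𝒜 b k : B), SetLike.coe_mem _, ?_⟩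
      intro hmem
      apply hb
      rw [h]
      have h1 := hmem 1
      rw [mul_one, hBcomm k (n - k) _ _ (SetLike.coe_mem _) hy] at h1
      exact stmt8_sign ℓ _ _ h1
  · -- uniqueness
    intro J hJr hJl hJp hJh hJfin hJnd1 hJnd2 hJn
    ext a
    simp only [SetLike.mem_coe, Set.mem_setOf_eq]
    constructor
    · intro ha b
      rw [stmt8_top 𝒜 n ℓ hℓvan (a * b)]
      have hmem : (DirectSum.decompose 𝒜 (a * b) n : B) ∈ J := by
        have := hJp (a * b) (hJr a b ha) n
        rwa [GradedRing.proj_apply] at this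
      have hL' : (⟨(DirectSum.decompose 𝒜 (a * b) n : B), SetLike.coe_mem _⟩ : 𝒜 n) ∈ L :=
        (hJn _).mp hmem
      exact (hℓL _).mpr hL'
    · intro h
      have key : (∑ i ∈ (DirectSum.decompose 𝒜 a).support,
          (DirectSum.decompose 𝒜 a i : B)) ∈ J := by
        refine Submodule.sum_mem _ fun i _ => ?_
        by_cases hi : i ≤ n
        · by_contra hnot
          obtain ⟨y, hy, hxy⟩ :=
            hJnd1 i hi _ (SetLike.coe_mem (DirectSum.decompose 𝒜 a i)) hnot
          have hzy : (DirectSum.decompose 𝒜 a i : B) * y ∈ 𝒜 n := by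
            have := SetLike.mul_mem_graded (SetLike.coe_mem (DirectSum.decompose 𝒜 a i)) hy
            rwa [Nat.add_sub_cancel' hi] at this
          have hne : ℓ ((DirectSum.decompose 𝒜 a i : B) * y) ≠ 0 := by
            intro h0
            exact hxy ((hJn ⟨_, hzy⟩).mpr ((hℓL ⟨_, hzy⟩).mp h0))
          apply hne
          have hh := stmt8_mul_right 𝒜 n ℓ hℓvan (Nat.sub_le n i) hy a
          rw [Nat.sub_sub_self hi] at hh
          rw [← hh]
          exact h y
        · exact hJh i (by omega) (SetLike.coe_mem _)
      rwa [DirectSum.sum_support_decompose 𝒜 a] at key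
end

section
/- Let V be a real vector space, m a natural number, and f: V → ℝ. Then the following are equivalent: (1) D_{v₁}⋯D_{v_{m+1}} f(x) = 0 for all v₁,…,v_{m+1} ∈ V and all x ∈ V, and for every finite-dimensional subspace U ⊆ V the restriction f|_U is continuous (equivalently, for every k and every injective linear map ι: ℝ^k → V the composition f ∘ ι is continuous); (2) for every k and every injective linear map ι: ℝ^k → V, the composition f ∘ ι: ℝ^k → ℝ is a polynomial function of total degree at most m. -/
/-!
Say that `f` has difference degree `< n` if all its `n`-fold forward differences vanish. Since
`Δ_h (f * g) = Δ_h f * g(· + h) + f * Δ_h g`, these functions form a filtered ring containing the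
constants in degree `< 1` and the coordinate functions in degree `< 2`; hence a polynomial of total
degree `≤ m` has difference degree `< m + 1`, which gives (2) ⇒ (1) on every finite-dimensional
subspace.

Conversely, a continuous `g : ℝ → ℝ` of difference degree `< m + 1` agrees with its Gregory–Newton
polynomial `∑ j ≤ m, Δ₁ʲ g 0 * (x choose j)`: the difference `G` of the two vanishes on `ℕ`, and for
every step `h` Newton's formula makes `n ↦ G (a + n h)` a polynomial in `n`, so the zeros spread to
all `-M + n / N` and then, by continuity, to all of `ℝ`. On `ℝ^(k+1)` one expands in the first
coordinate; the `j`-th Newton coefficient `x' ↦ Δ_{e₀}ʲ g (0, x')` has difference degree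
`< m + 1 - j`, so by induction on `k` it is a polynomial of degree `≤ m - j`.
-/

/-- The forward difference operator: `(D_v f)(x) = f(x + v) − f(x)`. -/
def fwdDiffOp {V : Type*} [AddCommGroup V] (v : V) (f : V → ℝ) : V → ℝ :=
  fun x => f (x + v) - f x

open Finset Function
open scoped fwdDiff

section FwdDiff

variable {M N G : Type*} [AddCommMonoid M] [AddCommMonoid N] [AddCommGroup G]

lemma fwdDiff_comm (h k : M) (f : M → G) : Δ_[h] (Δ_[k] f) = Δ_[k] (Δ_[h] f) := by
  funext x
  simp only [fwdDiff, add_right_comm x h k]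
  abel

lemma foldr_fwdDiff_fwdDiff (l : List M) (h : M) (f : M → G) :
    l.foldr fwdDiff (Δ_[h] f) = Δ_[h] (l.foldr fwdDiff f) := by
  induction l with
  | nil => rfl
  | cons k l ih => rw [List.foldr_cons, List.foldr_cons, ih, fwdDiff_comm]

lemma fwdDiff_comp_addMonoidHom (φ : N →+ M) (h : N) (f : M → G) :
    Δ_[h] (f ∘ φ) = Δ_[φ h] f ∘ φ := by
  funext x
  simp [fwdDiff]

lemma fwdDiff_iter_comp_addMonoidHom (φ : N →+ M) (h : N) (f : M → G) (j : ℕ) :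
    (Δ_[h])^[j] (f ∘ φ) = (Δ_[φ h])^[j] f ∘ φ := by
  induction j with
  | zero => rfl
  | succ j ih => rw [iterate_succ_apply', ih, fwdDiff_comp_addMonoidHom, iterate_succ_apply']

lemma foldr_fwdDiff_map_comp (φ : N →+ M) (l : List N) (f : M → G) :
    (l.map φ).foldr fwdDiff f ∘ φ = l.foldr fwdDiff (f ∘ φ) := by
  induction l with
  | nil => rfl
  | cons h l ih => rw [List.map_cons, List.foldr_cons, List.foldr_cons, ← ih,
      fwdDiff_comp_addMonoidHom]

@[simp] lemma fwdDiff_zero (h : M) : Δ_[h] (0 : M → G) = 0 := fwdDiff_const h 0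

lemma fwdDiff_mul {R : Type*} [CommRing R] (h : M) (f g : M → R) :
    Δ_[h] (f * g) = Δ_[h] f * (fun x => g (x + h)) + f * Δ_[h] g := by
  funext x
  simp only [fwdDiff, Pi.mul_apply, Pi.add_apply]
  ring

lemma Continuous.fwdDiff_iter [TopologicalSpace M] [ContinuousAdd M] [TopologicalSpace G]
    [IsTopologicalAddGroup G] {f : M → G} (hf : Continuous f) (h : M) (j : ℕ) :
    Continuous ((Δ_[h])^[j] f) := by
  induction j with
  | zero => exact hf
  | succ j ih =>
    rw [iterate_succ_apply']
    exact (ih.comp (continuous_add_const h)).sub ih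

end FwdDiff

/-- The functions `f` with `Δ_{h₁} ⋯ Δ_{hₙ} f = 0` for all `h₁, …, hₙ : M`. -/
def fwdDiffKer (M G : Type*) [AddCommMonoid M] [AddCommGroup G] : ℕ → AddSubgroup (M → G)
  | 0 => ⊥
  | n + 1 => ⨅ h : M, (fwdDiffKer M G n).comap (AddMonoidHom.mk' (fwdDiff h) (fwdDiff_add h))

namespace fwdDiffKer

variable {M N G : Type*} [AddCommMonoid M] [AddCommMonoid N] [AddCommGroup G] {n : ℕ} {f : M → G}

@[simp] lemma mem_zero : f ∈ fwdDiffKer M G 0 ↔ f = 0 := AddSubgroup.mem_bot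

@[simp] lemma mem_succ : f ∈ fwdDiffKer M G (n + 1) ↔ ∀ h, Δ_[h] f ∈ fwdDiffKer M G n := by
  simp [fwdDiffKer, AddSubgroup.mem_iInf]

lemma mem_iff_forall_foldr :
    f ∈ fwdDiffKer M G n ↔ ∀ v : Fin n → M, (List.ofFn v).foldr fwdDiff f = 0 := by
  induction n generalizing f with
  | zero => simp
  | succ n ih =>
    simp only [mem_succ, ih, Fin.forall_fin_succ_pi, List.ofFn_succ, Fin.cons_zero, Fin.cons_succ,
      List.foldr_cons, foldr_fwdDiff_fwdDiff]

lemma le_succ (n : ℕ) : fwdDiffKer M G n ≤ fwdDiffKer M G (n + 1) := by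
  induction n with
  | zero => intro f hf; simp_all
  | succ n ih => intro f hf; rw [mem_succ] at hf ⊢; exact fun h => ih (hf h)

lemma mono : Monotone (fwdDiffKer M G) := monotone_nat_of_le_succ le_succ

lemma comp_add_mem (hf : f ∈ fwdDiffKer M G n) (a : M) :
    (fun x => f (x + a)) ∈ fwdDiffKer M G n := by
  induction n generalizing f with
  | zero => simp_all; rfl
  | succ n ih =>
    rw [mem_succ] at hf ⊢
    intro h
    convert ih (hf h) using 1
    funext x
    exact fwdDiff_comp_add h f a x

lemma comp_mem (hf : f ∈ fwdDiffKer M G n) (φ : N →+ M) : f ∘ φ ∈ fwdDiffKer N G n := by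
  induction n generalizing f with
  | zero => simp_all
  | succ n ih =>
    rw [mem_succ] at hf ⊢
    intro h
    rw [fwdDiff_comp_addMonoidHom]
    exact ih (hf (φ h))

lemma fwdDiff_iter_mem (hf : f ∈ fwdDiffKer M G n) (h : M) (j : ℕ) :
    (Δ_[h])^[j] f ∈ fwdDiffKer M G (n - j) := by
  induction j with
  | zero => exact hf
  | succ j ih =>
    rw [iterate_succ_apply']
    rcases Nat.lt_or_ge j n with hj | hj
    · obtain ⟨k, hk⟩ : ∃ k, n - j = k + 1 := ⟨n - j - 1, by omega⟩
      rw [hk] at ih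
      rw [show n - (j + 1) = k by omega]
      exact mem_succ.1 ih h
    · rw [show n - j = 0 by omega, mem_zero] at ih
      rw [ih, fwdDiff_zero]
      exact zero_mem _

lemma fwdDiff_iter_eq_zero (hf : f ∈ fwdDiffKer M G n) (h : M) {j : ℕ} (hj : n ≤ j) :
    (Δ_[h])^[j] f = 0 := by
  simpa [Nat.sub_eq_zero_of_le hj] using fwdDiff_iter_mem hf h j

lemma const_mem (c : G) : (fun _ => c : M → G) ∈ fwdDiffKer M G 1 := by
  simp only [mem_succ, fwdDiff_const, mem_zero]
  exact fun _ => rfl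

section Ring

variable {R : Type*} [CommRing R]

lemma addMonoidHom_mem (φ : M →+ R) : ⇑φ ∈ fwdDiffKer M R 2 := by
  rw [mem_succ]
  intro h
  have : Δ_[h] φ = fun _ => φ h := by funext x; simp [fwdDiff]
  rw [this]
  exact const_mem _

theorem mul_mem {a b : ℕ} {f g : M → R} (hf : f ∈ fwdDiffKer M R (a + 1))
    (hg : g ∈ fwdDiffKer M R (b + 1)) : f * g ∈ fwdDiffKer M R (a + b + 1) := by
  induction hn : a + b using Nat.strong_induction_on generalizing a b f g with
  | _ n ih =>
  rw [← hn, mem_succ]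
  intro h
  rw [fwdDiff_mul]
  refine add_mem ?_ ?_
  · rcases a with _ | a
    · simp [mem_zero.1 (mem_succ.1 hf h)]
    · exact mono (by omega) (ih _ (by omega) (mem_succ.1 hf h) (comp_add_mem hg h) rfl)
  · rcases b with _ | b
    · simp [mem_zero.1 (mem_succ.1 hg h)]
    · exact mono (by omega) (ih _ (by omega) hf (mem_succ.1 hg h) rfl)

lemma pow_mem {a : ℕ} {f : M → R} (hf : f ∈ fwdDiffKer M R (a + 1)) (e : ℕ) :
    f ^ e ∈ fwdDiffKer M R (a * e + 1) := by
  induction e with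
  | zero => rw [pow_zero]; exact const_mem (1 : R)
  | succ e ih =>
    rw [pow_succ, Nat.mul_succ]
    exact mono (by omega) (mul_mem ih hf)

lemma prod_mem {ι : Type*} (s : Finset ι) {a : ι → ℕ} {f : ι → M → R}
    (hf : ∀ i ∈ s, f i ∈ fwdDiffKer M R (a i + 1)) :
    ∏ i ∈ s, f i ∈ fwdDiffKer M R (∑ i ∈ s, a i + 1) := by
  induction s using Finset.cons_induction with
  | empty => exact const_mem (1 : R)
  | cons i s _ ih =>
    rw [prod_cons, sum_cons, add_assoc]
    exact mul_mem (hf i (mem_cons_self i s))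
      (ih fun j hj => hf j (mem_cons_of_mem hj))

lemma mvPolynomial_eval_mem {σ : Type*} (p : MvPolynomial σ R) :
    (fun x => MvPolynomial.eval x p) ∈ fwdDiffKer (σ → R) R (p.totalDegree + 1) := by
  have hsum : (fun x => MvPolynomial.eval x p)
      = ∑ u ∈ p.support, fun x => MvPolynomial.eval x (MvPolynomial.monomial u (p.coeff u)) := by
    funext x
    rw [Finset.sum_apply, ← map_sum, ← p.as_sum]
  rw [hsum]
  refine sum_mem fun u hu => ?_
  have hmono : (fun x : σ → R => MvPolynomial.eval x (MvPolynomial.monomial u (p.coeff u)))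
      = (fun _ => p.coeff u) * ∏ i ∈ u.support, (⇑(Pi.evalAddMonoidHom (fun _ => R) i)) ^ u i := by
    funext x
    simp [MvPolynomial.eval_monomial, Finsupp.prod, Finset.prod_apply]
  rw [hmono]
  have hdeg : ∑ i ∈ u.support, 1 * u i ≤ p.totalDegree := by
    simpa [Finsupp.sum] using MvPolynomial.le_totalDegree hu
  refine mono (by omega) (mul_mem (a := 0) (const_mem _) (prod_mem (a := fun i => 1 * u i) _ ?_))
  exact fun i _ => pow_mem (addMonoidHom_mem _) _

lemma polynomial_eval_mem (p : Polynomial R) :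
    (fun x => p.eval x) ∈ fwdDiffKer R R (p.natDegree + 1) := by
  have hsum : (fun x => p.eval x)
      = ∑ i ∈ range (p.natDegree + 1), (fun _ => p.coeff i) * (fun x => x) ^ i := by
    funext x
    simp [Polynomial.eval_eq_sum_range, Finset.sum_apply]
  rw [hsum]
  refine sum_mem fun i hi => ?_
  have hi : 1 * i ≤ p.natDegree := by simpa [Nat.lt_succ_iff] using hi
  exact mono (by omega)
    (mul_mem (a := 0) (const_mem (p.coeff i)) (pow_mem (addMonoidHom_mem (AddMonoidHom.id R)) i))

end Ring

end fwdDiffKer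

section Newton

open Polynomial

variable {K : Type*} [Field K]

variable (K) in
noncomputable def binomPoly (j : ℕ) : K[X] := C (j.factorial : K)⁻¹ * descPochhammer K j

lemma binomPoly_eval_natCast [CharZero K] (n j : ℕ) :
    (binomPoly K j).eval (n : K) = n.choose j := by
  rw [binomPoly, eval_mul, eval_C, descPochhammer_eval_eq_descFactorial,
    Nat.descFactorial_eq_factorial_mul_choose, Nat.cast_mul,
    inv_mul_cancel_left₀ (Nat.cast_ne_zero.2 j.factorial_ne_zero)]

lemma natDegree_binomPoly_le (j : ℕ) : (binomPoly K j).natDegree ≤ j :=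
  (natDegree_C_mul_le _ _).trans (descPochhammer_natDegree K j).le

noncomputable def newtonPoly (m : ℕ) (h a : K) (g : K → K) : K[X] :=
  ∑ j ∈ range (m + 1), C ((Δ_[h])^[j] g a) * binomPoly K j

lemma natDegree_newtonPoly_le (m : ℕ) (h a : K) (g : K → K) : (newtonPoly m h a g).natDegree ≤ m :=
  natDegree_sum_le_of_forall_le _ _ fun j hj =>
    (natDegree_C_mul_le _ _).trans
      ((natDegree_binomPoly_le j).trans (by simpa [Nat.lt_succ_iff] using hj))

lemma newtonPoly_eval_natCast [CharZero K] {m : ℕ} {g : K → K} (hg : g ∈ fwdDiffKer K K (m + 1))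
    (h a : K) (n : ℕ) : (newtonPoly m h a g).eval (n : K) = g (a + n • h) := by
  rw [shift_eq_sum_fwdDiff_iter h g n a, newtonPoly, eval_finsetSum]
  calc ∑ j ∈ range (m + 1), (C ((Δ_[h])^[j] g a) * binomPoly K j).eval (n : K)
      = ∑ j ∈ range (n + m + 1), (n.choose j : K) * (Δ_[h])^[j] g a := by
        refine sum_subset (range_subset_range.2 (by omega)) (fun j hj hjm => ?_) |>.trans
          (sum_congr rfl fun j _ => ?_)
        · rw [fwdDiffKer.fwdDiff_iter_eq_zero hg h (by simpa using hjm)]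
          simp
        · rw [eval_mul, eval_C, binomPoly_eval_natCast, mul_comm]
    _ = ∑ j ∈ range (n + 1), n.choose j • (Δ_[h])^[j] g a := by
        refine (sum_subset (range_subset_range.2 (by omega)) (fun j hj hjn => ?_)).symm.trans
          (sum_congr rfl fun j _ => (nsmul_eq_mul _ _).symm)
        rw [Nat.choose_eq_zero_of_lt (by simpa using hjn), Nat.cast_zero, zero_mul]

lemma fwdDiffKer.apply_add_nsmul_eq_zero_of_infinite [CharZero K] {m : ℕ}
    {g : K → K} (hg : g ∈ fwdDiffKer K K (m + 1)) {h a : K}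
    (hS : {n : ℕ | g (a + n • h) = 0}.Infinite) (n : ℕ) : g (a + n • h) = 0 := by
  have hroots : ((Nat.cast : ℕ → K) '' {n | g (a + n • h) = 0}).Infinite :=
    hS.image Nat.cast_injective.injOn
  have hzero : newtonPoly m h a g = 0 := eq_zero_of_infinite_isRoot _ <| hroots.mono <| by
    rintro _ ⟨k, hk, rfl⟩
    simpa [IsRoot, newtonPoly_eval_natCast hg] using hk
  rw [← newtonPoly_eval_natCast hg, hzero, eval_zero]

open Filter Topology in
theorem fwdDiffKer.eq_zero_of_continuous {m : ℕ} {g : ℝ → ℝ} (hc : Continuous g)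
    (hg : g ∈ fwdDiffKer ℝ ℝ (m + 1)) (h0 : ∀ n : ℕ, g n = 0) : g = 0 := by
  -- With step `1 / N` from `-M`, the indices `N * (M + k)` land on the zeros `k`.
  have hgrid : ∀ M N n : ℕ, 0 < N → g (-M + n / N) = 0 := by
    intro M N n hN
    have hinj : Injective fun k : ℕ => N * (M + k) := fun k l hkl => by
      simpa [hN.ne'] using hkl
    have hS : {n : ℕ | g (-M + n • (1 / N : ℝ)) = 0}.Infinite := by
      refine (Set.infinite_range_of_injective hinj).mono ?_
      rintro _ ⟨k, rfl⟩
      have : -(M : ℝ) + ((N * (M + k) : ℕ) : ℝ) * (1 / N) = k := by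
        push_cast
        field_simp
        ring
      simp only [Set.mem_ofPred_eq, nsmul_eq_mul, this, h0]
    have := apply_add_nsmul_eq_zero_of_infinite hg hS n
    rwa [nsmul_eq_mul, mul_one_div] at this
  funext y
  set M := ⌈-y⌉₊
  have hx : 0 ≤ y + M := by linarith [Nat.le_ceil (-y)]
  have hlim : Tendsto (fun N : ℕ => -(M : ℝ) + ⌊(y + M) * N⌋₊ / N) atTop (𝓝 y) := by
    have := (tendsto_const_nhds (x := -(M : ℝ))).add
      ((tendsto_nat_floor_mul_div_atTop hx).comp tendsto_natCast_atTop_atTop)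
    rwa [neg_add_cancel_comm_assoc] at this
  refine tendsto_nhds_unique ((hc.tendsto y).comp hlim) (tendsto_const_nhds.congr' ?_)
  filter_upwards [eventually_gt_atTop 0] with N hN
  exact (hgrid M N _ hN).symm

theorem fwdDiffKer.eq_newtonPoly_eval {m : ℕ} {g : ℝ → ℝ} (hc : Continuous g)
    (hg : g ∈ fwdDiffKer ℝ ℝ (m + 1)) (x : ℝ) : g x = (newtonPoly m 1 0 g).eval x := by
  set p := newtonPoly m 1 0 g
  have hp : (fun x => p.eval x) ∈ fwdDiffKer ℝ ℝ (m + 1) :=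
    mono (by simpa using natDegree_newtonPoly_le m 1 0 g) (polynomial_eval_mem p)
  have h0 : ∀ n : ℕ, (g - fun x => p.eval x) n = 0 := fun n => by
    simp [p, newtonPoly_eval_natCast hg]
  have := congrFun (eq_zero_of_continuous (hc.sub p.continuous) (sub_mem hg hp) h0) x
  simpa [sub_eq_zero] using this

end Newton

lemma Polynomial.totalDegree_toMvPolynomial_le {R σ : Type*} [CommSemiring R] (p : Polynomial R)
    (i : σ) : (p.toMvPolynomial i).totalDegree ≤ p.natDegree := by
  conv_lhs => rw [p.as_sum_range_C_mul_X_pow]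
  rw [map_sum]
  refine (MvPolynomial.totalDegree_finsetSum _ _).trans (Finset.sup_le fun j hj => ?_)
  rw [map_mul, map_pow, toMvPolynomial_C, toMvPolynomial_X, MvPolynomial.C_mul_X_pow_eq_monomial]
  refine (MvPolynomial.totalDegree_monomial_le _ _).trans ?_
  simpa [Nat.lt_succ_iff] using hj

theorem fwdDiffKer.eq_sum_fwdDiff_iter_mul_binomPoly {k m : ℕ} {g : (Fin (k + 1) → ℝ) → ℝ}
    (hc : Continuous g) (hg : g ∈ fwdDiffKer (Fin (k + 1) → ℝ) ℝ (m + 1)) (t : ℝ)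
    (x' : Fin k → ℝ) :
    g (Fin.cons t x') = ∑ j ∈ range (m + 1),
      (Δ_[Fin.cons 1 0])^[j] g (Fin.cons 0 x') * (binomPoly ℝ j).eval t := by
  let θ : ℝ →+ Fin (k + 1) → ℝ := ((Fin.consLinearEquiv ℝ fun _ : Fin (k + 1) => ℝ).toLinearMap ∘ₗ
    LinearMap.inl ℝ ℝ (Fin k → ℝ)).toAddMonoidHom
  set c : Fin (k + 1) → ℝ := Fin.cons 0 x'
  have hslice : (fun s => g (Fin.cons s x')) = (fun y => g (y + c)) ∘ θ := by
    funext s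
    congr 1
    ext i
    refine Fin.cases ?_ (fun i => ?_) i <;> simp [θ, c]
  have hker : (fun s => g (Fin.cons s x')) ∈ fwdDiffKer ℝ ℝ (m + 1) :=
    hslice ▸ comp_mem (comp_add_mem hg c) θ
  have hcont : Continuous fun s => g (Fin.cons s x') :=
    hc.comp (Continuous.finCons (A := fun _ => ℝ) continuous_id continuous_const)
  rw [eq_newtonPoly_eval hcont hker t, newtonPoly, Polynomial.eval_finsetSum]
  refine sum_congr rfl fun j _ => ?_
  rw [Polynomial.eval_mul, Polynomial.eval_C, hslice, fwdDiff_iter_comp_addMonoidHom, comp_apply,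
    map_zero, fwdDiff_iter_comp_add, zero_add]
  rfl

open MvPolynomial in
theorem fwdDiffKer.exists_mvPolynomial_of_continuous {k m : ℕ} {g : (Fin k → ℝ) → ℝ}
    (hc : Continuous g) (hg : g ∈ fwdDiffKer (Fin k → ℝ) ℝ (m + 1)) :
    ∃ p : MvPolynomial (Fin k) ℝ, p.totalDegree ≤ m ∧ ∀ x, g x = eval x p := by
  induction k generalizing m with
  | zero => exact ⟨C (g 0), by simp, fun x => by rw [eval_C, Subsingleton.elim x 0]⟩
  | succ k ih =>
    let ψ : (Fin k → ℝ) →ₗ[ℝ] Fin (k + 1) → ℝ :=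
      (Fin.consLinearEquiv ℝ fun _ : Fin (k + 1) => ℝ).toLinearMap ∘ₗ LinearMap.inr ℝ ℝ _
    have hcoeff : ∀ j, ∃ P : MvPolynomial (Fin k) ℝ, P.totalDegree ≤ m - j ∧
        ∀ x', (Δ_[Fin.cons 1 0])^[j] g (Fin.cons 0 x') = eval x' P := fun j =>
      ih ((hc.fwdDiff_iter _ j).comp ψ.continuous_of_finiteDimensional)
        (mono (by omega) (comp_mem (fwdDiff_iter_mem hg _ j) ψ.toAddMonoidHom))
    choose P hPdeg hP using hcoeff
    refine ⟨∑ j ∈ range (m + 1), (binomPoly ℝ j).toMvPolynomial 0 * rename Fin.succ (P j),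
      ?_, fun x => ?_⟩
    · refine (totalDegree_finsetSum _ _).trans (Finset.sup_le fun j hj => ?_)
      have hj : j ≤ m := by simpa [Nat.lt_succ_iff] using hj
      calc _ ≤ _ + _ := totalDegree_mul _ _
        _ ≤ j + (m - j) := add_le_add
          (((binomPoly ℝ j).totalDegree_toMvPolynomial_le _).trans (natDegree_binomPoly_le j))
          ((totalDegree_rename_le _ _).trans (hPdeg j))
        _ = m := by omega
    · conv_lhs => rw [← Fin.cons_self_tail x, eq_sum_fwdDiff_iter_mul_binomPoly hc hg]
      rw [map_sum]
      refine sum_congr rfl fun j _ => ?_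
      rw [hP, map_mul, eval_toMvPolynomial, eval_rename, mul_comm]
      rfl

lemma fwdDiffKer.foldr_ofFn_eq_zero {M N G : Type*} [AddCommMonoid M] [AddCommMonoid N]
    [AddCommGroup G] (φ : N →+ M) {f : M → G} {n : ℕ} (hf : f ∘ φ ∈ fwdDiffKer N G n)
    {v : Fin n → M} (hv : ∀ i, v i ∈ Set.range φ) {x : M} (hx : x ∈ Set.range φ) :
    (List.ofFn v).foldr fwdDiff f x = 0 := by
  choose w hw using hv
  obtain ⟨y, rfl⟩ := hx
  have hvw : List.ofFn v = (List.ofFn w).map φ := by simp [List.map_ofFn, comp_def, hw]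
  rw [hvw, ← comp_apply (f := (List.map φ (List.ofFn w)).foldr fwdDiff f), foldr_fwdDiff_map_comp,
    mem_iff_forall_foldr.1 hf w, Pi.zero_apply]

lemma exists_injective_linearMap_of_finite {K V : Type*} [Field K] [AddCommGroup V] [Module K V]
    {s : Set V} (hs : s.Finite) :
    ∃ (k : ℕ) (ι : (Fin k → K) →ₗ[K] V), Injective ι ∧ s ⊆ Set.range ι := by
  have := FiniteDimensional.span_of_finite K hs
  let e := (Module.finBasis K (Submodule.span K s)).equivFun.symm
  refine ⟨_, (Submodule.span K s).subtype ∘ₗ e.toLinearMap,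
    Subtype.val_injective.comp e.injective, fun x hx => ⟨e.symm ⟨x, Submodule.subset_span hx⟩, ?_⟩⟩
  simp

lemma fwdDiffOp_eq_fwdDiff {V : Type*} [AddCommGroup V] : @fwdDiffOp V _ = fwdDiff := rfl

/-- Let `V` be a real vector space, `m` a natural number and
`f : V → ℝ`.  The following are equivalent:
(1) `D_{v₁} ⋯ D_{v_{m+1}} f = 0` for all `v₁, …, v_{m+1} ∈ V`, and for every
finite-dimensional subspace `U ⊆ V` the restriction `f|_U` is continuous (equivalently,
for every `k` and every injective linear map `ι : ℝᵏ → V` the composition `f ∘ ι` is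
continuous);
(2) for every `k` and every injective linear map `ι : ℝᵏ → V`, the composition
`f ∘ ι : ℝᵏ → ℝ` is a polynomial function of total degree at most `m`. -/
theorem stmt10 {V : Type*} [AddCommGroup V] [Module ℝ V] (m : ℕ) (f : V → ℝ) :
    ((∀ v : Fin (m + 1) → V, ∀ x : V, ((List.ofFn v).foldr fwdDiffOp f) x = 0) ∧
      (∀ (k : ℕ) (ι : (Fin k → ℝ) →ₗ[ℝ] V), Function.Injective ι → Continuous (f ∘ ι)))
    ↔
    (∀ (k : ℕ) (ι : (Fin k → ℝ) →ₗ[ℝ] V), Function.Injective ι →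
      ∃ p : MvPolynomial (Fin k) ℝ, p.totalDegree ≤ m ∧
        ∀ x : Fin k → ℝ, f (ι x) = MvPolynomial.eval x p) := by
  rw [fwdDiffOp_eq_fwdDiff]
  constructor
  · rintro ⟨hdiff, hcont⟩ k ι hι
    have hf : f ∈ fwdDiffKer V ℝ (m + 1) :=
      fwdDiffKer.mem_iff_forall_foldr.2 fun v => funext (hdiff v)
    exact fwdDiffKer.exists_mvPolynomial_of_continuous (hcont k ι hι)
      (fwdDiffKer.comp_mem hf ι.toAddMonoidHom)
  · intro hpoly
    refine ⟨fun v x => ?_, fun k ι hι => ?_⟩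
    · obtain ⟨k, ι, hι, hs⟩ :=
        exists_injective_linearMap_of_finite (K := ℝ) ((Set.finite_range v).insert x)
      obtain ⟨p, hp, hfp⟩ := hpoly k ι hι
      have hfι : f ∘ ι ∈ fwdDiffKer (Fin k → ℝ) ℝ (m + 1) := by
        rw [show f ∘ ι = fun y => MvPolynomial.eval y p from funext hfp]
        exact fwdDiffKer.mono (by omega) (fwdDiffKer.mvPolynomial_eval_mem p)
      exact fwdDiffKer.foldr_ofFn_eq_zero ι.toAddMonoidHom hfι
        (fun i => hs (Set.mem_insert_of_mem _ (Set.mem_range_self i))) (hs (Set.mem_insert x _))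
    · obtain ⟨p, -, hfp⟩ := hpoly k ι hι
      rw [show f ∘ ι = fun y => MvPolynomial.eval y p from funext hfp]
      exact p.continuous_eval
end
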